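/- Let $K \ge 2$, let $d : \mathrm{Fin}\,K \to \mathrm{Fin}\,K \to \mathbb{R}$ be a nonnegative symmetric distance function, and let $A$ be a vertex. Let $c \ge \sum_{i,j} d(i,j)$. Extend $d$ to $d'$ on $K+1$ vertices by adding a dummy vertex whose distance to and from $A$ is $0$ and whose distance to and from every other vertex is $c$. Then the minimum over all Hamiltonian cycles on the $K+1$ vertices of the total cycle length under $d'$ equals $c$ plus the minimum over all Hamiltonian paths on the original $K$ vertices that start at $A$ (with arbitrary end vertex) of the total path length under $d$. -/

import Mathlib

/-- Cost of the Hamiltonian path visiting the vertices of `Fin K` in the order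
`σ 0, σ 1, …, σ (K-1)`: the sum of the distances between consecutive vertices. -/
noncomputable def pathCost {K : ℕ} (d : Fin K → Fin K → ℝ) (σ : Equiv.Perm (Fin K)) : ℝ :=
  ∑ i : Fin K, if h : (i : ℕ) + 1 < K then d (σ i) (σ ⟨(i : ℕ) + 1, h⟩) else 0

/-- Cost of the Hamiltonian cycle visiting the vertices of `Fin (K+1)` in the order
`σ 0, σ 1, …, σ K, σ 0`: the sum of the distances between consecutive vertices,
including the closing edge back to the start (`i + 1` wraps around in `Fin (K+1)`). -/
noncomputable def cycleCost {K : ℕ} (d : Fin (K + 1) → Fin (K + 1) → ℝ)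
    (σ : Equiv.Perm (Fin (K + 1))) : ℝ :=
  ∑ i : Fin (K + 1), d (σ i) (σ (i + 1))

/-!
Rotating a Hamiltonian cycle on the `K + 1` cities brings the dummy city to the front; the cycle
is then the dummy followed by a Hamiltonian path `σ` on the original cities, and its cost is the
cost of `σ` plus the two dummy edges, each costing `0` if it meets `A` and `c` otherwise. Since
`K ≥ 2`, at most one of them is free. If one is, reversing `σ` if necessary (`d` is symmetric)
the cycle costs `c` plus a path starting at `A`. Otherwise it costs at least `2c`, which already
exceeds `c` plus the cost of any path, as a path costs at most the sum of all distances.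
-/

open Finset

section Costs

variable {n : ℕ}

theorem pathCost_eq_sum_castSucc_succ (d : Fin (n + 1) → Fin (n + 1) → ℝ)
    (σ : Equiv.Perm (Fin (n + 1))) :
    pathCost d σ = ∑ i : Fin n, d (σ i.castSucc) (σ i.succ) := by
  rw [pathCost, Fin.sum_univ_castSucc]
  simp only [Fin.val_castSucc, Fin.val_last, lt_self_iff_false, dite_false, add_zero,
    add_lt_add_iff_right, Fin.is_lt, dite_true]
  rfl

theorem cycleCost_eq_pathCost_add (d : Fin (n + 1) → Fin (n + 1) → ℝ)
    (σ : Equiv.Perm (Fin (n + 1))) :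
    cycleCost d σ = pathCost d σ + d (σ (Fin.last n)) (σ 0) := by
  rw [cycleCost, pathCost_eq_sum_castSucc_succ, Fin.sum_univ_castSucc, Fin.last_add_one]
  simp only [Fin.coeSucc_eq_succ]

theorem cycleCost_addRight_trans (d : Fin (n + 1) → Fin (n + 1) → ℝ)
    (σ : Equiv.Perm (Fin (n + 1))) (m : Fin (n + 1)) :
    cycleCost d ((Equiv.addRight m).trans σ) = cycleCost d σ :=
  Fintype.sum_equiv (Equiv.addRight m) _ _ fun i => by simp [add_right_comm i 1 m]

theorem pathCost_revPerm_trans (d : Fin (n + 1) → Fin (n + 1) → ℝ)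
    (hsymm : ∀ i j, d i j = d j i) (σ : Equiv.Perm (Fin (n + 1))) :
    pathCost d (Fin.revPerm.trans σ) = pathCost d σ := by
  simp only [pathCost_eq_sum_castSucc_succ, Equiv.trans_apply, Fin.revPerm_apply,
    Fin.rev_castSucc, Fin.rev_succ]
  exact Fintype.sum_equiv Fin.revPerm _ _ fun i => hsymm _ _

theorem pathCost_nonneg {K : ℕ} {d : Fin K → Fin K → ℝ} (hd : ∀ i j, 0 ≤ d i j)
    (σ : Equiv.Perm (Fin K)) : 0 ≤ pathCost d σ :=
  sum_nonneg fun i _ => by split_ifs <;> simp [hd]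

theorem pathCost_le_sum_sum {K : ℕ} {d : Fin K → Fin K → ℝ} (hd : ∀ i j, 0 ≤ d i j)
    (σ : Equiv.Perm (Fin K)) : pathCost d σ ≤ ∑ i, ∑ j, d i j :=
  calc pathCost d σ ≤ ∑ i, ∑ j, d (σ i) j := by
        refine sum_le_sum fun i _ => ?_
        split_ifs
        · exact single_le_sum (f := d (σ i)) (fun j _ => hd _ j) (mem_univ _)
        · exact sum_nonneg fun j _ => hd _ j
    _ = ∑ i, ∑ j, d i j := Equiv.sum_comp σ fun i => ∑ j, d i j

end Costs

section PrependLast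

variable {K : ℕ}

def prependLast (σ : Equiv.Perm (Fin K)) : Equiv.Perm (Fin (K + 1)) :=
  (finSuccEquiv K).trans (σ.optionCongr.trans finSuccEquivLast.symm)

@[simp]
theorem prependLast_zero (σ : Equiv.Perm (Fin K)) : prependLast σ 0 = Fin.last K := by
  simp [prependLast]

@[simp]
theorem prependLast_succ (σ : Equiv.Perm (Fin K)) (j : Fin K) :
    prependLast σ j.succ = (σ j).castSucc := by
  simp [prependLast]

theorem exists_prependLast_eq {τ : Equiv.Perm (Fin (K + 1))} (h0 : τ 0 = Fin.last K) :
    ∃ σ, prependLast σ = τ := by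
  have hne (j : Fin K) : τ j.succ ≠ Fin.last K := by
    rw [← h0, τ.injective.ne_iff]
    exact Fin.succ_ne_zero j
  let f (j : Fin K) : Fin K := (τ j.succ).castPred (hne j)
  have hf : f.Injective := fun a b hab =>
    Fin.succ_injective _ (τ.injective (by simpa [f] using hab))
  refine ⟨Equiv.ofBijective f (Finite.injective_iff_bijective.mp hf), Equiv.ext fun i => ?_⟩
  cases i using Fin.cases with
  | zero => simp [h0]
  | succ j => simp [f]

theorem cycleCost_prependLast (d' : Fin (K + 2) → Fin (K + 2) → ℝ)
    (σ : Equiv.Perm (Fin (K + 1))) :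
    cycleCost d' (prependLast σ) = d' (Fin.last _) (σ 0).castSucc
      + pathCost (fun i j => d' i.castSucc j.castSucc) σ
      + d' (σ (Fin.last K)).castSucc (Fin.last _) := by
  have h_end : prependLast σ (Fin.last (K + 1)) = (σ (Fin.last K)).castSucc := by
    rw [← Fin.succ_last, prependLast_succ]
  rw [cycleCost_eq_pathCost_add, pathCost_eq_sum_castSucc_succ, Fin.sum_univ_succ,
    pathCost_eq_sum_castSucc_succ, h_end]
  simp only [Fin.castSucc_zero, prependLast_zero, prependLast_succ, ← Fin.succ_castSucc]

end PrependLast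

/-- The right-hand side is the cost of the cycle `prependLast σ` under the dummy extension. -/
theorem add_iInf_pathCost_le {n : ℕ} [NeZero n] {d : Fin (n + 1) → Fin (n + 1) → ℝ}
    (hd : ∀ i j, 0 ≤ d i j) (hsymm : ∀ i j, d i j = d j i) (A : Fin (n + 1)) {c : ℝ}
    (hc : ∑ i, ∑ j, d i j ≤ c) (σ : Equiv.Perm (Fin (n + 1))) :
    c + ⨅ τ : {τ : Equiv.Perm (Fin (n + 1)) // τ 0 = A}, pathCost d τ.val
      ≤ (if σ 0 = A then 0 else c) + pathCost d σ + (if σ (Fin.last n) = A then 0 else c) := by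
  set P := ⨅ τ : {τ : Equiv.Perm (Fin (n + 1)) // τ 0 = A}, pathCost d τ.val
  have hP_le {τ : Equiv.Perm (Fin (n + 1))} (hτ : τ 0 = A) : P ≤ pathCost d τ :=
    ciInf_le (Finite.bddBelow_range _) (⟨τ, hτ⟩ : {τ : Equiv.Perm (Fin (n + 1)) // τ 0 = A})
  have hP_le_c : P ≤ c :=
    (hP_le (Equiv.swap_apply_left 0 A)).trans ((pathCost_le_sum_sum hd _).trans hc)
  have h_path := pathCost_nonneg hd σ
  by_cases h_start : σ 0 = A
  · have h_end : σ (Fin.last n) ≠ A := h_start ▸ σ.injective.ne Fin.last_pos'.ne'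
    simp only [h_start, h_end, if_true, if_false]
    linarith [hP_le h_start]
  by_cases h_end : σ (Fin.last n) = A
  · have h_rev := hP_le (τ := Fin.revPerm.trans σ) (by simpa using h_end)
    rw [pathCost_revPerm_trans d hsymm] at h_rev
    simp only [h_start, h_end, if_true, if_false]
    linarith
  · simp only [h_start, h_end, if_false]
    linarith

/-- **Appendix C of the paper, variation `NoReturn-GivenOrigin-ArbitraryEnd`.**
For `K ≥ 2` cities with nonnegative symmetric distances `d`, a given origin city
`A`, and `c` at least the sum of all pairwise distances, extend `d` to `d'` by
adding a dummy city (the vertex `Fin.last K`) at distance `0` to and from `A` and at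
distance `c` to and from every other city.  Then the minimum total length over all
Hamiltonian cycles on the `K+1` cities under `d'` equals `c` plus the minimum total
length over all Hamiltonian paths on the original `K` cities starting at `A` (with
arbitrary end city) under `d`. -/
theorem tsp_dummy_given_origin_arbitrary_end
    (K : ℕ) (hK : 2 ≤ K) (d : Fin K → Fin K → ℝ)
    (hd : ∀ i j, 0 ≤ d i j) (hsymm : ∀ i j, d i j = d j i)
    (A : Fin K)
    (c : ℝ) (hc : (∑ i : Fin K, ∑ j : Fin K, d i j) ≤ c)
    (d' : Fin (K + 1) → Fin (K + 1) → ℝ)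
    (horig : ∀ i j : Fin K, d' i.castSucc j.castSucc = d i j)
    (hA : d' A.castSucc (Fin.last K) = 0 ∧ d' (Fin.last K) A.castSucc = 0)
    (hother : ∀ i : Fin K, i ≠ A →
      d' i.castSucc (Fin.last K) = c ∧ d' (Fin.last K) i.castSucc = c) :
    (⨅ σ : Equiv.Perm (Fin (K + 1)), cycleCost d' σ)
      = c + ⨅ σ : {σ : Equiv.Perm (Fin K) // σ ⟨0, by omega⟩ = A},
          pathCost d σ.val := by
  obtain ⟨n, rfl⟩ : ∃ n, K = n + 1 := ⟨K - 1, by omega⟩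
  have : NeZero n := ⟨by omega⟩
  have : Nonempty {σ : Equiv.Perm (Fin (n + 1)) // σ 0 = A} :=
    ⟨⟨Equiv.swap 0 A, Equiv.swap_apply_left 0 A⟩⟩
  have h_from_dummy (i : Fin (n + 1)) : d' (Fin.last _) i.castSucc = if i = A then 0 else c := by
    split_ifs with h
    exacts [h ▸ hA.2, (hother i h).2]
  have h_to_dummy (i : Fin (n + 1)) : d' i.castSucc (Fin.last _) = if i = A then 0 else c := by
    split_ifs with h
    exacts [h ▸ hA.1, (hother i h).1]
  have h_cost (σ : Equiv.Perm (Fin (n + 1))) : cycleCost d' (prependLast σ)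
      = (if σ 0 = A then 0 else c) + pathCost d σ + (if σ (Fin.last n) = A then 0 else c) := by
    have h_restrict : (fun i j => d' i.castSucc j.castSucc) = d := funext₂ horig
    rw [cycleCost_prependLast, h_from_dummy, h_to_dummy, h_restrict]
  apply le_antisymm
  · have h_le : (⨅ τ : Equiv.Perm (Fin (n + 1 + 1)), cycleCost d' τ) - c
        ≤ ⨅ σ : {σ : Equiv.Perm (Fin (n + 1)) // σ 0 = A}, pathCost d σ.val := by
      refine le_ciInf fun ⟨σ, hσ⟩ => ?_
      have h_end : σ (Fin.last n) ≠ A := hσ ▸ σ.injective.ne Fin.last_pos'.ne'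
      have h_inf := ciInf_le (Finite.bddBelow_range (cycleCost d')) (prependLast σ)
      rw [h_cost, if_pos hσ, if_neg h_end] at h_inf
      linarith
    exact sub_le_iff_le_add'.mp h_le
  · refine le_ciInf fun τ => ?_
    obtain ⟨σ, hσ⟩ := exists_prependLast_eq (τ := (Equiv.addRight (τ.symm (Fin.last _))).trans τ)
      (by simp)
    rw [← cycleCost_addRight_trans d' τ (τ.symm (Fin.last _)), ← hσ, h_cost]
    exact add_iInf_pathCost_le hd hsymm A hc σ
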